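/- Let y₀ ∈ (−1,1) and F = (f₀,g₀) ∈ B² with g₀ ≠ y₀, and set σ₂ = 1 − sgn(y₀−g₀)·y₀, B = −2f₀/σ₂, C = (f₀² + (y₀−g₀)² − 2|y₀−g₀|)/σ₂². Then the discriminant of the type-2 Funk parabola equation satisfies B² − 4C = (4/σ₂²)·|y₀−g₀|·(2 − |y₀−g₀|) > 0, so the equation x² + B·x·ȳ + C·ȳ² + E·ȳ = 0 is of hyperbolic type in Euclidean geometry. -/

import Mathlib

/-- The Funk distance on the open unit ball of Euclidean n-space:
`d_F(P,Q) = ln((√k − ⟨P, Q−P⟩)/(√k − ⟨Q, Q−P⟩))` with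
`k = ⟨P, Q−P⟩² + (1 − ‖P‖²)‖Q−P‖²`. -/
noncomputable def funkDist {n : ℕ} (P Q : EuclideanSpace ℝ (Fin n)) : ℝ :=
  Real.log
    ((Real.sqrt ((inner ℝ P (Q - P) : ℝ) ^ 2 + (1 - ‖P‖ ^ 2) * ‖Q - P‖ ^ 2) - (inner ℝ P (Q - P) : ℝ)) /
     (Real.sqrt ((inner ℝ P (Q - P) : ℝ) ^ 2 + (1 - ‖P‖ ^ 2) * ‖Q - P‖ ^ 2) - (inner ℝ Q (Q - P) : ℝ)))

/-- `ρ(ε,η) = (1 + sgn(ε−η)·ε)/(1 + sgn(ε−η)·η)`. -/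
noncomputable def rho (ε η : ℝ) : ℝ :=
  (1 + Real.sign (ε - η) * ε) / (1 + Real.sign (ε - η) * η)

/-- The point `(a,b)` of the Euclidean plane. -/
def pt (a b : ℝ) : EuclideanSpace ℝ (Fin 2) := WithLp.toLp 2 ![a, b]

/-!
With `d = y₀ − g₀`, the `f₀²` terms cancel in `B² − 4C = 4(f₀² − (f₀² + d² − 2|d|))/σ₂²`,
leaving `4|d|(2 − |d|)/σ₂²`. This is positive because `d ≠ 0`, and `|d| < 2` since both
`y₀` and `g₀` lie in `(−1, 1)`; the latter also gives `σ₂ ≥ 1 − |y₀| > 0`.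
-/

lemma norm_pt_sq (a b : ℝ) : ‖pt a b‖ ^ 2 = a ^ 2 + b ^ 2 := by
  rw [EuclideanSpace.norm_eq, Real.sq_sqrt (by positivity)]
  simp [pt, Fin.sum_univ_two, sq_abs]

lemma abs_snd_lt_one_of_norm_pt_lt_one {a b : ℝ} (h : ‖pt a b‖ < 1) : |b| < 1 := by
  have hsq : a ^ 2 + b ^ 2 < 1 := by
    rw [← norm_pt_sq]
    exact pow_lt_one₀ (norm_nonneg _) h two_ne_zero
  exact (sq_lt_one_iff_abs_lt_one b).mp (by nlinarith [sq_nonneg a])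

lemma one_sub_sign_mul_pos (s : ℝ) {y : ℝ} (hy : |y| < 1) : 0 < 1 - Real.sign s * y := by
  obtain ⟨hy₁, hy₂⟩ := abs_lt.mp hy
  rcases Real.sign_apply_eq s with h | h | h <;> rw [h] <;> linarith

lemma neg_two_mul_div_sq_sub_four_mul (f d σ : ℝ) :
    (-2 * f / σ) ^ 2 - 4 * ((f ^ 2 + d ^ 2 - 2 * |d|) / σ ^ 2) =
      4 / σ ^ 2 * |d| * (2 - |d|) := by
  rw [← sq_abs d]
  ring

/-- The discriminant of the type-2 Funk parabola equation:
`B² − 4C = (4/σ₂²)·|y₀−g₀|·(2 − |y₀−g₀|) > 0`, so the equation is of hyperbolic type. -/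
theorem funk_parabola_stmt11 (y₀ f₀ g₀ σ₂ B C : ℝ)
    (hy₀ : -1 < y₀ ∧ y₀ < 1) (hF : ‖pt f₀ g₀‖ < 1) (hgy : g₀ ≠ y₀)
    (hσ : σ₂ = 1 - Real.sign (y₀ - g₀) * y₀)
    (hB : B = -2 * f₀ / σ₂)
    (hC : C = (f₀ ^ 2 + (y₀ - g₀) ^ 2 - 2 * |y₀ - g₀|) / σ₂ ^ 2) :
    B ^ 2 - 4 * C = (4 / σ₂ ^ 2) * |y₀ - g₀| * (2 - |y₀ - g₀|) ∧
    0 < B ^ 2 - 4 * C := by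
  have hy : |y₀| < 1 := abs_lt.mpr hy₀
  have hg : |g₀| < 1 := abs_snd_lt_one_of_norm_pt_lt_one hF
  have hdisc : B ^ 2 - 4 * C = (4 / σ₂ ^ 2) * |y₀ - g₀| * (2 - |y₀ - g₀|) := by
    rw [hB, hC, neg_two_mul_div_sq_sub_four_mul]
  refine ⟨hdisc, hdisc ▸ ?_⟩
  have hσ_pos : 0 < σ₂ := hσ ▸ one_sub_sign_mul_pos (y₀ - g₀) hy
  have hd_pos : 0 < |y₀ - g₀| := abs_pos.mpr (sub_ne_zero.mpr hgy.symm)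
  have hd_lt : |y₀ - g₀| < 2 := by linarith [abs_sub y₀ g₀]
  have hgap : 0 < 2 - |y₀ - g₀| := by linarith
  positivity
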